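/- Let a, b1, b2 > 0 and x ∈ [0,1). Then g_{a,b1,b2}(x,1) = ln(1/(1−x)) + 2ψ(1) − ψ(a) − ψ(b1). Equivalently, Σ_{k=1}^∞ (b2)_k/(k·(b1+b2)_k) = ψ(b1+b2) − ψ(b1). -/

import Mathlib

open Real MeasureTheory

/-- Rising factorial (Pochhammer symbol) `(a)_k`. -/
noncomputable def poch (a : ℝ) (k : ℕ) : ℝ := (ascPochhammer ℝ k).eval a

/-- Euler beta function `B(p,q) = Γ(p)Γ(q)/Γ(p+q)`. -/
noncomputable def eulerBeta (p q : ℝ) : ℝ := Real.Gamma p * Real.Gamma q / Real.Gamma (p + q)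

/-- Digamma function `ψ(x) = Γ'(x)/Γ(x)`. -/
noncomputable def psi (x : ℝ) : ℝ := deriv Real.Gamma x / Real.Gamma x

/-- General term of the double series for `B(a,b₁+b₂)·F₁(a;b₁,b₂;a+b₁+b₂;x,y)`. -/
noncomputable def F1term (a b1 b2 x y : ℝ) (p : ℕ × ℕ) : ℝ :=
  poch a (p.1 + p.2) * poch b1 p.1 * poch b2 p.2 * x ^ p.1 * y ^ p.2 /
    (poch (a + b1 + b2) (p.1 + p.2) * (Nat.factorial p.1 : ℝ) * (Nat.factorial p.2 : ℝ))

/-- `f_{a,b₁,b₂}(x,y) = B(a,b₁+b₂)·F₁(a;b₁,b₂;a+b₁+b₂;x,y)` as a double series. -/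
noncomputable def f (a b1 b2 x y : ℝ) : ℝ :=
  eulerBeta a (b1 + b2) * ∑' p : ℕ × ℕ, F1term a b1 b2 x y p

/-- The approximation `g_{a,b₁,b₂}(x,y)`. -/
noncomputable def g (a b1 b2 x y : ℝ) : ℝ :=
  Real.log (1 / (1 - x)) + 2 * psi 1 - psi a - psi (b1 + b2) +
    ∑' k : ℕ, poch b2 (k + 1) / ((k + 1 : ℝ) * poch (b1 + b2) (k + 1)) *
      ((y - x) / (1 - x)) ^ (k + 1)

/-!
The ratio `(b)_k / (a + b)_k = B(b + k, a) / B(b, a)` is a normalised moment of the beta kernel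
`t ^ (b - 1) * (1 - t) ^ (a - 1)` on `(0, 1)`, and `∑ t ^ k / k = -log (1 - t)` there. Summing
under the integral turns the series into `-∫ t ^ (b - 1) * (1 - t) ^ (a - 1) * log (1 - t) / B(b, a)`,
and differentiating the beta integral in `a` identifies this with `-∂ₐ log B(b, a) = ψ(a + b) - ψ(a)`.
-/

open Set Filter

lemma poch_succ (a : ℝ) (k : ℕ) : poch a (k + 1) = poch a k * (a + k) := by
  simp [poch, ascPochhammer_succ_eval]

lemma poch_pos {a : ℝ} (ha : 0 < a) (k : ℕ) : 0 < poch a k := by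
  induction k with
  | zero => simp [poch]
  | succ k ih => rw [poch_succ]; positivity

lemma Gamma_add_nat_eq_mul_poch {a : ℝ} (ha : 0 < a) (k : ℕ) :
    Gamma (a + k) = Gamma a * poch a k := by
  induction k with
  | zero => simp [poch]
  | succ k ih =>
    rw [Nat.cast_succ, ← add_assoc, Gamma_add_one (by positivity), ih, poch_succ]
    ring

lemma eulerBeta_pos {p q : ℝ} (hp : 0 < p) (hq : 0 < q) : 0 < eulerBeta p q :=
  ProbabilityTheory.beta_pos hp hq

lemma eulerBeta_add_nat_left {p q : ℝ} (hp : 0 < p) (hq : 0 < q) (n : ℕ) :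
    eulerBeta (p + n) q = eulerBeta p q * poch p n / poch (p + q) n := by
  have hGpq := (Gamma_pos_of_pos (add_pos hp hq)).ne'
  have hpoch := (poch_pos (add_pos hp hq) n).ne'
  rw [eulerBeta, eulerBeta, add_right_comm, Gamma_add_nat_eq_mul_poch hp,
    Gamma_add_nat_eq_mul_poch (add_pos hp hq)]
  field_simp

lemma ofReal_cpow_mul_one_sub_cpow {p q t : ℝ} (ht : t ∈ Icc (0 : ℝ) 1) :
    ((t ^ (p - 1) * (1 - t) ^ (q - 1) : ℝ) : ℂ) =
      (t : ℂ) ^ ((p : ℂ) - 1) * (1 - (t : ℂ)) ^ ((q : ℂ) - 1) := by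
  rw [Complex.ofReal_mul, Complex.ofReal_cpow ht.1, Complex.ofReal_cpow (sub_nonneg.2 ht.2)]
  push_cast
  rfl

theorem integral_rpow_mul_one_sub_rpow {p q : ℝ} (hp : 0 < p) (hq : 0 < q) :
    ∫ t in Ioo (0 : ℝ) 1, t ^ (p - 1) * (1 - t) ^ (q - 1) = eulerBeta p q := by
  have h : Complex.betaIntegral p q = ↑(∫ t in Ioo (0 : ℝ) 1, t ^ (p - 1) * (1 - t) ^ (q - 1)) := by
    rw [Complex.betaIntegral, intervalIntegral.integral_of_le zero_le_one,
      integral_Ioc_eq_integral_Ioo, ← integral_complex_ofReal]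
    exact setIntegral_congr_fun measurableSet_Ioo
      fun t ht ↦ (ofReal_cpow_mul_one_sub_cpow (Ioo_subset_Icc_self ht)).symm
  rw [show eulerBeta p q = ProbabilityTheory.beta p q from rfl,
    ProbabilityTheory.beta_eq_betaIntegralReal p q hp hq, h, Complex.ofReal_re]

theorem integrableOn_rpow_mul_one_sub_rpow {p q : ℝ} (hp : 0 < p) (hq : 0 < q) :
    IntegrableOn (fun t : ℝ ↦ t ^ (p - 1) * (1 - t) ^ (q - 1)) (Ioo 0 1) :=
  -- a non-integrable function would have integral `0`, but `B(p, q) > 0`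
  Integrable.of_integral_ne_zero <| by
    rw [integral_rpow_mul_one_sub_rpow hp hq]; exact (eulerBeta_pos hp hq).ne'

theorem integral_rpow_mul_one_sub_rpow_mul_pow {p q : ℝ} (hp : 0 < p) (hq : 0 < q) (n : ℕ) :
    ∫ t in Ioo (0 : ℝ) 1, t ^ (p - 1) * (1 - t) ^ (q - 1) * t ^ n =
      eulerBeta p q * poch p n / poch (p + q) n := by
  rw [← eulerBeta_add_nat_left hp hq, ← integral_rpow_mul_one_sub_rpow (by positivity) hq]
  refine setIntegral_congr_fun measurableSet_Ioo fun t ht ↦ ?_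
  rw [show p + n - 1 = p - 1 + n by ring, rpow_add_natCast ht.1.ne']
  ring

lemma abs_rpow_mul_log_le {u s c : ℝ} (hu₀ : 0 < u) (hu₁ : u ≤ 1) (hc : 0 < c) (hs : 2 * c ≤ s) :
    |u ^ (s - 1) * log u| ≤ u ^ (c - 1) / c := by
  have hlog : -log u ≤ u ^ (-c) / c := by
    simpa [log_inv, inv_rpow hu₀.le, rpow_neg hu₀.le] using log_le_rpow_div (inv_nonneg.2 hu₀.le) hc
  rw [abs_mul, abs_of_pos (rpow_pos_of_pos hu₀ _), abs_of_nonpos (log_nonpos hu₀.le hu₁)]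
  calc u ^ (s - 1) * -log u ≤ u ^ (s - 1) * (u ^ (-c) / c) := by gcongr
    _ = u ^ (s - 1 - c) / c := by rw [sub_eq_add_neg (s - 1), rpow_add hu₀]; ring
    _ ≤ u ^ (c - 1) / c :=
      div_le_div_of_nonneg_right (rpow_le_rpow_of_exponent_ge hu₀ hu₁ (by linarith)) hc.le

lemma hasDerivAt_Gamma_of_pos {s : ℝ} (hs : 0 < s) : HasDerivAt Gamma (deriv Gamma s) s :=
  (differentiableAt_Gamma fun m ↦ (hs.trans_le' (by simp)).ne').hasDerivAt

lemma hasDerivAt_eulerBeta_right {p q : ℝ} (hp : 0 < p) (hq : 0 < q) :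
    HasDerivAt (eulerBeta p) (eulerBeta p q * (psi q - psi (p + q))) q := by
  have hGq := (Gamma_pos_of_pos hq).ne'
  have hGpq := (Gamma_pos_of_pos (add_pos hp hq)).ne'
  have h : HasDerivAt (fun s ↦ Gamma p * Gamma s / Gamma (p + s)) _ q :=
    ((hasDerivAt_Gamma_of_pos hq).const_mul (Gamma p)).div
      ((hasDerivAt_Gamma_of_pos (add_pos hp hq)).comp_const_add p q) hGpq
  refine h.congr_deriv ?_
  simp only [eulerBeta, psi]
  field_simp

theorem hasDerivAt_integral_rpow_mul_one_sub_rpow {p q : ℝ} (hp : 0 < p) (hq : 0 < q) :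
    IntegrableOn (fun t : ℝ ↦ t ^ (p - 1) * (1 - t) ^ (q - 1) * log (1 - t)) (Ioo 0 1) ∧
      HasDerivAt (fun s ↦ ∫ t in Ioo (0 : ℝ) 1, t ^ (p - 1) * (1 - t) ^ (s - 1))
        (∫ t in Ioo (0 : ℝ) 1, t ^ (p - 1) * (1 - t) ^ (q - 1) * log (1 - t)) q := by
  have hc : 0 < q / 4 := by positivity
  refine hasDerivAt_integral_of_dominated_loc_of_deriv_le (μ := volume.restrict (Ioo 0 1))
    (F := fun s t ↦ t ^ (p - 1) * (1 - t) ^ (s - 1))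
    (F' := fun s t ↦ t ^ (p - 1) * (1 - t) ^ (s - 1) * log (1 - t))
    (bound := fun t ↦ t ^ (p - 1) * (1 - t) ^ (q / 4 - 1) / (q / 4))
    (Metric.ball_mem_nhds q (half_pos hq)) (.of_forall fun s ↦ by fun_prop)
    (integrableOn_rpow_mul_one_sub_rpow hp hq) (by fun_prop) ?_
    ((integrableOn_rpow_mul_one_sub_rpow hp hc).div_const (q / 4)) ?_
  all_goals refine (ae_restrict_iff' measurableSet_Ioo).2 (.of_forall fun t ⟨ht₀, ht₁⟩ s hs ↦ ?_)
  · have hs : q / 2 < s := by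
      have := (abs_lt.1 (Metric.mem_ball.1 hs)).1
      linarith
    rw [mul_assoc, mul_div_assoc, norm_mul, norm_of_nonneg (rpow_nonneg ht₀.le _), norm_eq_abs]
    gcongr
    exact abs_rpow_mul_log_le (by linarith) (by linarith) hc (by linarith)
  · have h := ((hasStrictDerivAt_const_rpow (sub_pos.2 ht₁) (s - 1)).hasDerivAt.comp s
      ((hasDerivAt_id s).sub_const 1)).const_mul (t ^ (p - 1))
    simpa [mul_assoc] using h

theorem integral_rpow_mul_one_sub_rpow_mul_log {p q : ℝ} (hp : 0 < p) (hq : 0 < q) :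
    ∫ t in Ioo (0 : ℝ) 1, t ^ (p - 1) * (1 - t) ^ (q - 1) * log (1 - t) =
      eulerBeta p q * (psi q - psi (p + q)) := by
  refine (hasDerivAt_integral_rpow_mul_one_sub_rpow hp hq).2.unique
    ((hasDerivAt_eulerBeta_right hp hq).congr_of_eventuallyEq ?_)
  filter_upwards [eventually_gt_nhds hq] with s hs
  exact integral_rpow_mul_one_sub_rpow hp hs

theorem hasSum_poch_div_mul_poch {a b : ℝ} (ha : 0 < a) (hb : 0 < b) :
    HasSum (fun k : ℕ ↦ poch b (k + 1) / ((k + 1 : ℝ) * poch (a + b) (k + 1)))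
      (psi (a + b) - psi a) := by
  set F : ℕ → ℝ → ℝ := fun k t ↦ t ^ (b - 1) * (1 - t) ^ (a - 1) * (t ^ (k + 1) / (k + 1))
  have hF_nonneg : ∀ k, ∀ t ∈ Ioo (0 : ℝ) 1, 0 ≤ F k t := fun k t ⟨ht₀, ht₁⟩ ↦ by
    have := sub_pos.2 ht₁
    positivity
  have hF_sum : ∀ t ∈ Ioo (0 : ℝ) 1,
      HasSum (F · t) (-(t ^ (b - 1) * (1 - t) ^ (a - 1) * log (1 - t))) := fun t ⟨ht₀, ht₁⟩ ↦ by
    rw [← mul_neg]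
    exact (hasSum_pow_div_log_of_abs_lt_one (abs_lt.2 ⟨by linarith, ht₁⟩)).mul_left _
  have hF_int : ∀ k : ℕ, ∫ t in Ioo (0 : ℝ) 1, F k t =
      eulerBeta b a * (poch b (k + 1) / ((k + 1 : ℝ) * poch (a + b) (k + 1))) := fun k ↦ by
    simp only [F, mul_div_assoc', integral_div, integral_rpow_mul_one_sub_rpow_mul_pow hb ha,
      add_comm b a]
    field_simp
  have h := hasSum_integral_of_dominated_convergence F (fun k ↦ by fun_prop)
    (fun k ↦ (ae_restrict_iff' measurableSet_Ioo).2 (.of_forall fun t ht ↦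
      (norm_of_nonneg (hF_nonneg k t ht)).le))
    ((ae_restrict_iff' measurableSet_Ioo).2 (.of_forall fun t ht ↦ (hF_sum t ht).summable))
    ((hasDerivAt_integral_rpow_mul_one_sub_rpow hb ha).1.neg.congr_fun
      (fun t ht ↦ (hF_sum t ht).tsum_eq.symm) measurableSet_Ioo)
    ((ae_restrict_iff' measurableSet_Ioo).2 (.of_forall hF_sum))
  rw [integral_neg, integral_rpow_mul_one_sub_rpow_mul_log hb ha, funext hF_int, add_comm b a] at h
  rw [← hasSum_mul_left_iff (eulerBeta_pos hb ha).ne']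
  rwa [neg_mul_eq_mul_neg, neg_sub] at h

theorem g_at_one_general (a b1 b2 x : ℝ) (hb1 : 0 < b1) (hb2 : 0 < b2) (hx1 : x < 1) :
    g a b1 b2 x 1 = Real.log (1 / (1 - x)) + 2 * psi 1 - psi a - psi b1 ∧
    ∑' k : ℕ, poch b2 (k + 1) / ((k + 1 : ℝ) * poch (b1 + b2) (k + 1)) =
      psi (b1 + b2) - psi b1 := by
  have hsum := (hasSum_poch_div_mul_poch hb1 hb2).tsum_eq
  refine ⟨?_, hsum⟩
  rw [g, div_self (sub_ne_zero.2 hx1.ne')]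
  simp only [one_pow, mul_one, hsum]
  ring

/-- at `y = 1` the approximation `g` reduces to Ramanujan's approximation. -/
theorem g_at_one (a b1 b2 x : ℝ) (ha : 0 < a) (hb1 : 0 < b1) (hb2 : 0 < b2)
    (hx0 : 0 ≤ x) (hx1 : x < 1) :
    g a b1 b2 x 1 = Real.log (1 / (1 - x)) + 2 * psi 1 - psi a - psi b1 ∧
    ∑' k : ℕ, poch b2 (k + 1) / ((k + 1 : ℝ) * poch (b1 + b2) (k + 1)) =
      psi (b1 + b2) - psi b1 :=
  g_at_one_general a b1 b2 x hb1 hb2 hx1
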